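/- Let 0 < ε ≤ δ and set 𝒜_ε^δ := {(x,y) ∈ ℝ × (0,∞) : |x| ≤ δ/2 and y > max(2|x|, ε)}. Then for all real x₁, x₂ with r := |x₁ − x₂|, the hyperbolic measure of the intersection of the two horizontal translates satisfies λ((𝒜_ε^δ + x₁) ∩ (𝒜_ε^δ + x₂)) = C_ε^δ(r), where C_ε^δ(r) := ln(δ/ε) + 1 − r/ε if r ≤ ε; C_ε^δ(r) := ln(δ/r) if ε ≤ r ≤ δ; and C_ε^δ(r) := 0 if r ≥ δ. -/

import Mathlib

open MeasureTheory

/-- The hyperbolic measure `λ(A) = ∬_A y⁻² dx dy` on the upper half-plane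
`ℍ = {(x,y) : y > 0}`. -/
noncomputable def hypMeasure : Measure (ℝ × ℝ) :=
  (volume.restrict {p : ℝ × ℝ | 0 < p.2}).withDensity fun p => ENNReal.ofReal (1 / p.2 ^ 2)

/-- The horizontal translate `A + t = {(x + t, y) : (x, y) ∈ A}`. -/
def htrans (A : Set (ℝ × ℝ)) (t : ℝ) : Set (ℝ × ℝ) := {p : ℝ × ℝ | (p.1 - t, p.2) ∈ A}

/-- The infinite cone region
`𝒜_ε^δ := {(x,y) ∈ ℝ × (0,∞) : |x| ≤ δ/2 ∧ y > max(2|x|, ε)}`. -/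
def coneTrunc (ε δ : ℝ) : Set (ℝ × ℝ) :=
  {p : ℝ × ℝ | |p.1| ≤ δ / 2 ∧ max (2 * |p.1|) ε < p.2}

/-- The piecewise covariance function `C_ε^δ` of the exactly scaling field. -/
noncomputable def Ccov (ε δ r : ℝ) : ℝ :=
  if r ≤ ε then Real.log (δ / ε) + 1 - r / ε
  else if r ≤ δ then Real.log (δ / r)
  else 0

/-!
By Fubini, `λ(S) = ∫_{y>0} y⁻² |S_y| dy`, where `S_y` is the horizontal slice of
`S = (𝒜_ε^δ + x₁) ∩ (𝒜_ε^δ + x₂)` at height `y`. For `y > ε` the slice of each translate lies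
between the open and the closed interval of radius `min(δ, y)/2` about `xᵢ`, so
`|S_y| = (min(δ, y) − r)⁺`; for `y ≤ ε` it is empty. The integral `∫_ε^∞ (min(δ, y) − r)⁺ y⁻² dy`
vanishes on `(ε, max(ε, r)]` and is computed on `(max(ε, r), δ]` and on `(δ, ∞)` by the
fundamental theorem of calculus, with antiderivatives `log y + r/y` and `−(δ − r)/y`.
-/

open Set Metric Filter Topology

theorem hypMeasure_eq_prod :
    hypMeasure = volume.prod
      ((volume.restrict (Ioi 0)).withDensity fun y => ENNReal.ofReal (1 / y ^ 2)) := by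
  rw [prod_withDensity_right (by fun_prop), ← Measure.restrict_univ (μ := volume),
    Measure.prod_restrict, Measure.restrict_univ, ← Measure.volume_eq_prod, hypMeasure,
    univ_prod]
  rfl

theorem hypMeasure_apply {s : Set (ℝ × ℝ)} (hs : MeasurableSet s) :
    hypMeasure s =
      ∫⁻ y in Ioi 0, ENNReal.ofReal (1 / y ^ 2) * volume ((fun x => (x, y)) ⁻¹' s) := by
  rw [hypMeasure_eq_prod, Measure.prod_apply_symm hs,
    lintegral_withDensity_eq_lintegral_mul _ (by fun_prop) (measurable_measure_prodMk_right hs)]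
  rfl

theorem Real.volume_ball_inter_ball (x₁ x₂ m : ℝ) :
    volume (ball x₁ m ∩ ball x₂ m) = ENNReal.ofReal (2 * m - |x₁ - x₂|) := by
  rw [Real.ball_eq_Ioo, Real.ball_eq_Ioo, Ioo_inter_Ioo, Real.volume_Ioo, min_add_add_right,
    max_sub_sub_right]
  congr 1
  linarith [max_sub_min_eq_abs' x₁ x₂]

theorem Real.volume_closedBall_inter_closedBall (x₁ x₂ m : ℝ) :
    volume (closedBall x₁ m ∩ closedBall x₂ m) = ENNReal.ofReal (2 * m - |x₁ - x₂|) := by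
  rw [Real.closedBall_eq_Icc, Real.closedBall_eq_Icc, Icc_inter_Icc, Real.volume_Icc,
    min_add_add_right, max_sub_sub_right]
  congr 1
  linarith [max_sub_min_eq_abs' x₁ x₂]

theorem measurableSet_htrans {A : Set (ℝ × ℝ)} (hA : MeasurableSet A) (t : ℝ) :
    MeasurableSet (htrans A t) :=
  ((measurable_fst.sub_const t).prodMk measurable_snd) hA

theorem measurableSet_coneTrunc (ε δ : ℝ) : MeasurableSet (coneTrunc ε δ) :=
  (measurableSet_le measurable_fst.abs measurable_const).inter
    (measurableSet_lt ((measurable_fst.abs.const_mul 2).max measurable_const) measurable_snd)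

theorem mem_htrans_coneTrunc {ε δ t x y : ℝ} :
    (x, y) ∈ htrans (coneTrunc ε δ) t ↔ |x - t| ≤ δ / 2 ∧ 2 * |x - t| < y ∧ ε < y := by
  simp only [htrans, coneTrunc, mem_ofPred_eq, max_lt_iff]

theorem ball_subset_slice_htrans_coneTrunc {ε δ t y : ℝ} (hy : ε < y) :
    ball t (min (δ / 2) (y / 2)) ⊆ (fun x => (x, y)) ⁻¹' htrans (coneTrunc ε δ) t := by
  intro x hx
  rw [mem_ball, Real.dist_eq, lt_min_iff] at hx
  exact mem_htrans_coneTrunc.2 ⟨hx.1.le, by linarith [hx.2], hy⟩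

theorem slice_htrans_coneTrunc_subset_closedBall (ε δ t y : ℝ) :
    (fun x => (x, y)) ⁻¹' htrans (coneTrunc ε δ) t ⊆ closedBall t (min (δ / 2) (y / 2)) := by
  intro x hx
  obtain ⟨hδ, hy, -⟩ := mem_htrans_coneTrunc.1 hx
  rw [mem_closedBall, Real.dist_eq, le_min_iff]
  exact ⟨hδ, by linarith⟩

theorem slice_htrans_coneTrunc_eq_empty {ε δ t y : ℝ} (hy : y ≤ ε) :
    (fun x => (x, y)) ⁻¹' htrans (coneTrunc ε δ) t = ∅ :=
  eq_empty_of_forall_notMem fun _ hx => hy.not_gt (mem_htrans_coneTrunc.1 hx).2.2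

theorem volume_slice_inter_htrans_coneTrunc {ε δ y : ℝ} (hy : ε < y) (x₁ x₂ : ℝ) :
    volume ((fun x => (x, y)) ⁻¹' (htrans (coneTrunc ε δ) x₁ ∩ htrans (coneTrunc ε δ) x₂)) =
      ENNReal.ofReal (min δ y - |x₁ - x₂|) := by
  have hm : 2 * min (δ / 2) (y / 2) = min δ y := by
    rw [min_div_div_right zero_le_two]; ring
  rw [preimage_inter, ← hm]
  apply le_antisymm
  · rw [← Real.volume_closedBall_inter_closedBall]
    exact measure_mono (inter_subset_inter (slice_htrans_coneTrunc_subset_closedBall ..)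
      (slice_htrans_coneTrunc_subset_closedBall ..))
  · rw [← Real.volume_ball_inter_ball]
    exact measure_mono (inter_subset_inter (ball_subset_slice_htrans_coneTrunc hy)
      (ball_subset_slice_htrans_coneTrunc hy))

theorem hypMeasure_inter_htrans_coneTrunc_eq_lintegral {ε : ℝ} (hε : 0 ≤ ε) (δ x₁ x₂ : ℝ) :
    hypMeasure (htrans (coneTrunc ε δ) x₁ ∩ htrans (coneTrunc ε δ) x₂) =
      ∫⁻ y in Ioi ε, ENNReal.ofReal ((min δ y - |x₁ - x₂|) / y ^ 2) := by
  have hmeas := measurableSet_htrans (measurableSet_coneTrunc ε δ)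
  have hIoi : Ioi ε = Ioi ε ∩ Ioi 0 := by rw [Ioi_inter_Ioi, max_eq_left hε]
  rw [hypMeasure_apply ((hmeas x₁).inter (hmeas x₂)), hIoi,
    ← setLIntegral_indicator measurableSet_Ioi]
  refine lintegral_congr fun y => ?_
  rcases le_or_gt y ε with hy | hy
  · rw [indicator_of_notMem (notMem_Ioi.2 hy), preimage_inter,
      slice_htrans_coneTrunc_eq_empty hy, empty_inter, measure_empty, mul_zero]
  · rw [indicator_of_mem (mem_Ioi.2 hy), volume_slice_inter_htrans_coneTrunc hy,
      ← ENNReal.ofReal_mul (by positivity), one_div_mul_eq_div]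

theorem setLIntegral_ofReal_eq_zero {α : Type*} [MeasurableSpace α] {μ : Measure α} {s : Set α}
    {f : α → ℝ} (hs : MeasurableSet s) (hf : ∀ x ∈ s, f x ≤ 0) :
    ∫⁻ x in s, ENNReal.ofReal (f x) ∂μ = 0 := by
  rw [setLIntegral_congr_fun hs fun x hx => ENNReal.ofReal_eq_zero.2 (hf x hx), lintegral_zero]

theorem lintegral_Ioc_ofReal_eq_sub_of_hasDerivAt {g g' : ℝ → ℝ} {a b : ℝ} (hab : a ≤ b)
    (hderiv : ∀ x ∈ Icc a b, HasDerivAt g (g' x) x) (hcont : ContinuousOn g' (Icc a b))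
    (hpos : ∀ x ∈ Ioc a b, 0 ≤ g' x) :
    ∫⁻ x in Ioc a b, ENNReal.ofReal (g' x) = ENNReal.ofReal (g b - g a) := by
  rw [← ofReal_integral_eq_lintegral_ofReal (hcont.integrableOn_Icc.mono_set Ioc_subset_Icc_self)
      ((ae_restrict_iff' measurableSet_Ioc).2 (ae_of_all _ hpos)),
    ← intervalIntegral.integral_of_le hab, intervalIntegral.integral_eq_sub_of_hasDerivAt
      (by rwa [uIcc_of_le hab]) (hcont.intervalIntegrable_of_Icc hab)]

theorem lintegral_Ioi_ofReal_eq_sub_of_hasDerivAt {g g' : ℝ → ℝ} {a l : ℝ}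
    (hderiv : ∀ x ∈ Ici a, HasDerivAt g (g' x) x) (hpos : ∀ x ∈ Ioi a, 0 ≤ g' x)
    (hg : Tendsto g atTop (𝓝 l)) :
    ∫⁻ x in Ioi a, ENNReal.ofReal (g' x) = ENNReal.ofReal (l - g a) := by
  rw [← ofReal_integral_eq_lintegral_ofReal (integrableOn_Ioi_deriv_of_nonneg' hderiv hpos hg)
      ((ae_restrict_iff' measurableSet_Ioi).2 (ae_of_all _ hpos)),
    integral_Ioi_of_hasDerivAt_of_nonneg' hderiv hpos hg]

theorem lintegral_Ioi_ofReal_div_sq {c a : ℝ} (hc : 0 ≤ c) (ha : 0 < a) :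
    ∫⁻ y in Ioi a, ENNReal.ofReal (c / y ^ 2) = ENNReal.ofReal (c / a) := by
  have hderiv : ∀ y ∈ Ici a, HasDerivAt (fun t => -c * t⁻¹) (c / y ^ 2) y := fun y hy =>
    ((hasDerivAt_inv (ha.trans_le hy).ne').const_mul (-c)).congr_deriv (by ring)
  have hlim : Tendsto (fun t => -c * t⁻¹) atTop (𝓝 0) := by
    simpa using tendsto_inv_atTop_zero.const_mul (-c)
  rw [lintegral_Ioi_ofReal_eq_sub_of_hasDerivAt hderiv (fun y _ => by positivity) hlim]
  congr 1
  ring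

theorem log_add_div_le_log_add_div {r a b : ℝ} (ha : 0 < a) (hra : r ≤ a) (hab : a ≤ b) :
    Real.log a + r / a ≤ Real.log b + r / b := by
  have hb : 0 < b := ha.trans_le hab
  have hlog : 1 - a / b ≤ Real.log b - Real.log a := by
    simpa [inv_div, Real.log_div hb.ne' ha.ne'] using Real.one_sub_inv_le_log_of_pos (div_pos hb ha)
  have hdiv : r / a - r / b ≤ 1 - a / b := by
    rw [div_sub_div _ _ ha.ne' hb.ne', one_sub_div hb.ne', ← mul_div_mul_left (b - a) b ha.ne']
    exact div_le_div_of_nonneg_right (by nlinarith) (by positivity)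
  linarith

theorem lintegral_Ioi_ofReal_min_sub_div_sq {a δ r : ℝ} (ha : 0 < a) (hra : r ≤ a)
    (haδ : a ≤ δ) :
    ∫⁻ y in Ioi a, ENNReal.ofReal ((min δ y - r) / y ^ 2) =
      ENNReal.ofReal (Real.log (δ / a) + 1 - r / a) := by
  have hδ : 0 < δ := ha.trans_le haδ
  have hderiv : ∀ y ∈ Icc a δ,
      HasDerivAt (fun t => Real.log t + r * t⁻¹) ((y - r) / y ^ 2) y := fun y hy => by
    have hy : y ≠ 0 := (ha.trans_le hy.1).ne'
    refine ((Real.hasDerivAt_log hy).add ((hasDerivAt_inv hy).const_mul r)).congr_deriv ?_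
    field_simp
    ring
  have hcont : ContinuousOn (fun y => (y - r) / y ^ 2) (Icc a δ) :=
    (continuousOn_id.sub continuousOn_const).div (continuousOn_id.pow 2)
      fun y hy => (pow_pos (ha.trans_le hy.1) 2).ne'
  have hmiddle : ∫⁻ y in Ioc a δ, ENNReal.ofReal ((min δ y - r) / y ^ 2) =
      ENNReal.ofReal (Real.log δ + r * δ⁻¹ - (Real.log a + r * a⁻¹)) := by
    rw [setLIntegral_congr_fun measurableSet_Ioc fun y hy => by rw [min_eq_right hy.2]]
    exact lintegral_Ioc_ofReal_eq_sub_of_hasDerivAt haδ hderiv hcont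
      fun y hy => div_nonneg (by linarith [hy.1]) (sq_nonneg y)
  have htail : ∫⁻ y in Ioi δ, ENNReal.ofReal ((min δ y - r) / y ^ 2) =
      ENNReal.ofReal ((δ - r) / δ) := by
    rw [setLIntegral_congr_fun measurableSet_Ioi fun y hy => by rw [min_eq_left (le_of_lt hy)]]
    exact lintegral_Ioi_ofReal_div_sq (by linarith) hδ
  have hmiddle_nonneg : 0 ≤ Real.log δ + r * δ⁻¹ - (Real.log a + r * a⁻¹) := by
    simpa [div_eq_mul_inv] using log_add_div_le_log_add_div ha hra haδ
  rw [← Ioc_union_Ioi_eq_Ioi haδ, lintegral_union measurableSet_Ioi (Ioc_disjoint_Ioi le_rfl),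
    hmiddle, htail, ← ENNReal.ofReal_add hmiddle_nonneg (div_nonneg (by linarith) hδ.le),
    Real.log_div hδ.ne' ha.ne']
  congr 1
  field_simp
  ring

theorem Ccov_of_le {ε δ r : ℝ} (hε : 0 < ε) (hεδ : ε ≤ δ) (hδr : δ ≤ r) : Ccov ε δ r = 0 := by
  rw [Ccov]
  split_ifs with hrε hrδ
  · obtain rfl : δ = ε := le_antisymm (hδr.trans hrε) hεδ
    obtain rfl : r = δ := le_antisymm hrε hδr
    rw [div_self hε.ne', Real.log_one]
    ring
  · rw [le_antisymm hrδ hδr, div_self (hε.trans_le hεδ).ne', Real.log_one]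
  · rfl

theorem Ccov_of_lt {ε δ r : ℝ} (hε : 0 < ε) (hrδ : r < δ) :
    Ccov ε δ r = Real.log (δ / max ε r) + 1 - r / max ε r := by
  rcases le_or_gt r ε with hrε | hεr
  · rw [Ccov, if_pos hrε, max_eq_left hrε]
  · rw [Ccov, if_neg hεr.not_ge, if_pos hrδ.le, max_eq_right hεr.le, div_self (hε.trans hεr).ne']
    ring

theorem lintegral_Ioi_ofReal_min_sub_div_sq_eq_Ccov {ε δ : ℝ} (hε : 0 < ε) (hεδ : ε ≤ δ)
    (r : ℝ) :
    ∫⁻ y in Ioi ε, ENNReal.ofReal ((min δ y - r) / y ^ 2) = ENNReal.ofReal (Ccov ε δ r) := by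
  rcases le_or_gt δ r with hδr | hrδ
  · rw [Ccov_of_le hε hεδ hδr, setLIntegral_ofReal_eq_zero measurableSet_Ioi
      fun y _ => div_nonpos_of_nonpos_of_nonneg (by linarith [min_le_left δ y]) (sq_nonneg y),
      ENNReal.ofReal_zero]
  · have hεa : ε ≤ max ε r := le_max_left ε r
    have hvanish : ∀ y ∈ Ioc ε (max ε r), (min δ y - r) / y ^ 2 ≤ 0 := fun y hy => by
      have hyr : y ≤ r := (le_max_iff.1 hy.2).resolve_left hy.1.not_ge
      exact div_nonpos_of_nonpos_of_nonneg (by linarith [min_le_right δ y]) (sq_nonneg y)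
    rw [Ccov_of_lt hε hrδ, ← Ioc_union_Ioi_eq_Ioi hεa,
      lintegral_union measurableSet_Ioi (Ioc_disjoint_Ioi le_rfl),
      setLIntegral_ofReal_eq_zero measurableSet_Ioc hvanish, zero_add,
      lintegral_Ioi_ofReal_min_sub_div_sq (hε.trans_le hεa) (le_max_right ε r)
        (max_le hεδ hrδ.le)]

/-- For `0 < ε ≤ δ` and all real `x₁, x₂` with `r := |x₁ − x₂|`, the hyperbolic measure of the
intersection of the two horizontal translates of `𝒜_ε^δ` equals `C_ε^δ(r)`. -/
theorem hypMeasure_inter_htrans_coneTrunc (ε δ : ℝ) (hε : 0 < ε) (hεδ : ε ≤ δ) (x₁ x₂ : ℝ) :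
    hypMeasure (htrans (coneTrunc ε δ) x₁ ∩ htrans (coneTrunc ε δ) x₂) =
      ENNReal.ofReal (Ccov ε δ |x₁ - x₂|) := by
  rw [hypMeasure_inter_htrans_coneTrunc_eq_lintegral hε.le,
    lintegral_Ioi_ofReal_min_sub_div_sq_eq_Ccov hε hεδ]
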